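/- Lindenbaum Lemma for CoRGAL: every consistent theory x can be extended to a maximal consistent theory y with x ⊆ y. -/
import Mathlib


/- Formalization of Coalition and Relativised Group Announcement Logic (CoRGAL). -/

namespace CoRGAL

/-- Purely epistemic formulas (the fragment L_EL). -/
inductive EForm (Agt : Type) : Type
  | atom : ℕ → EForm Agt
  | neg  : EForm Agt → EForm Agt
  | and  : EForm Agt → EForm Agt → EForm Agt
  | know : Agt → EForm Agt → EForm Agt

/-- Formulas of L_CoRGAL: atoms, ¬, ∧, K_a, [φ]ψ, [G,χ]φ, [⟨G⟩]φ. -/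
inductive Form (Agt : Type) : Type
  | atom  : ℕ → Form Agt
  | neg   : Form Agt → Form Agt
  | and   : Form Agt → Form Agt → Form Agt
  | know  : Agt → Form Agt → Form Agt
  | ann   : Form Agt → Form Agt → Form Agt          -- [φ]ψ
  | group : Finset Agt → Form Agt → Form Agt → Form Agt  -- [G,χ]φ
  | coal  : Finset Agt → Form Agt → Form Agt        -- [⟨G⟩]φ

variable {Agt : Type}

def Form.imp (φ ψ : Form Agt) : Form Agt := .neg (.and φ (.neg ψ))
def Form.iff' (φ ψ : Form Agt) : Form Agt := .and (φ.imp ψ) (ψ.imp φ)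
def Form.bot : Form Agt := .and (.atom 0) (.neg (.atom 0))
def Form.top : Form Agt := .neg Form.bot

def EForm.toForm : EForm Agt → Form Agt
  | .atom p => .atom p
  | .neg φ => .neg φ.toForm
  | .and φ ψ => .and φ.toForm ψ.toForm
  | .know a φ => .know a φ.toForm

/-- The G-announcement ⋀_{i ∈ G} K_i (f i), with all f i epistemic. -/
noncomputable def GAnn (G : Finset Agt) (f : Agt → EForm Agt) : Form Agt :=
  (G.toList.map fun i => Form.know i (f i).toForm).foldr Form.and Form.top

/-- Epistemic models: states, an equivalence relation for each agent, a valuation. -/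
structure Model (Agt : Type) where
  W : Type
  rel : Agt → W → W → Prop
  rel_equiv : ∀ a, Equivalence (rel a)
  val : ℕ → W → Prop

/-- Updated model: restriction to the states satisfying S. -/
def Model.restrict (M : Model Agt) (S : M.W → Prop) : Model Agt where
  W := {v : M.W // S v}
  rel a u v := M.rel a u.1 v.1
  rel_equiv a := ⟨fun u => (M.rel_equiv a).refl u.1,
    fun h => (M.rel_equiv a).symm h, fun h h' => (M.rel_equiv a).trans h h'⟩
  val p v := M.val p v.1

/-- Satisfaction for purely epistemic formulas (standard S5 semantics). -/
def esat (M : Model Agt) : M.W → EForm Agt → Prop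
  | w, .atom p => M.val p w
  | w, .neg φ => ¬ esat M w φ
  | w, .and φ ψ => esat M w φ ∧ esat M w ψ
  | w, .know a φ => ∀ v, M.rel a w v → esat M v φ

/-- Truth of the G-announcement ⋀_{i∈G} K_i (f i) at (M,w). -/
def gsat (M : Model Agt) (w : M.W) (G : Finset Agt) (f : Agt → EForm Agt) : Prop :=
  ∀ i ∈ G, ∀ v, M.rel i w v → esat M v (f i)

variable [DecidableEq Agt] [Fintype Agt]

/-- Satisfaction for L_CoRGAL.
[φ]ψ: if φ is true then ψ holds in the model restricted to φ-states.
[G,χ]φ: χ is true and for every G-announcement ψ_G, [ψ_G ∧ χ]φ.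
[⟨G⟩]φ: for every G-announcement ψ_G there is an (A∖G)-announcement χ such
that if ψ_G is true then ⟨ψ_G ∧ χ⟩φ. -/
def sat : (M : Model Agt) → M.W → Form Agt → Prop
  | M, w, .atom p => M.val p w
  | M, w, .neg φ => ¬ sat M w φ
  | M, w, .and φ ψ => sat M w φ ∧ sat M w ψ
  | M, w, .know a φ => ∀ v, M.rel a w v → sat M v φ
  | M, w, .ann φ ψ =>
      ∀ h : sat M w φ, sat (M.restrict fun v => sat M v φ) ⟨w, h⟩ ψ
  | M, w, .group G χ φ =>
      sat M w χ ∧ ∀ f : Agt → EForm Agt,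
        ∀ h : gsat M w G f ∧ sat M w χ,
          sat (M.restrict fun v => gsat M v G f ∧ sat M v χ) ⟨w, h⟩ φ
  | M, w, .coal G φ =>
      ∀ f : Agt → EForm Agt, ∃ g : Agt → EForm Agt,
        gsat M w G f →
          ∃ h : gsat M w G f ∧ gsat M w Gᶜ g,
            sat (M.restrict fun v => gsat M v G f ∧ gsat M v Gᶜ g) ⟨w, h⟩ φ

/-- Validity: truth at every pointed epistemic model. -/
def valid (φ : Form Agt) : Prop := ∀ (M : Model Agt) (w : M.W), sat M w φ

/-- The dual coalition operator ⟨[G]⟩φ := ¬[⟨G⟩]¬φ. -/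
def coalDia (G : Finset Agt) (φ : Form Agt) : Form Agt := .neg (.coal G (.neg φ))

/-- Necessity forms η ::= ♯ | φ → η | K_a η | [φ]η. -/
inductive NForm (Agt : Type) : Type
  | hole : NForm Agt
  | imp  : Form Agt → NForm Agt → NForm Agt
  | know : Agt → NForm Agt → NForm Agt
  | ann  : Form Agt → NForm Agt → NForm Agt

/-- η(φ): replace the placeholder ♯ by φ. -/
def NForm.subst : NForm Agt → Form Agt → Form Agt
  | .hole, φ => φ
  | .imp ψ η, φ => ψ.imp (η.subst φ)
  | .know a η, φ => .know a (η.subst φ)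
  | .ann ψ η, φ => .ann ψ (η.subst φ)

/-- Instances of propositional tautologies (treating non-Boolean subformulas as atoms). -/
def Tautology (φ : Form Agt) : Prop :=
  ∀ v : Form Agt → Prop,
    (∀ ψ, v (Form.neg ψ) ↔ ¬ v ψ) →
    (∀ ψ χ, v (Form.and ψ χ) ↔ (v ψ ∧ v χ)) →
    v φ

/-- The axiom system CoRGAL: theorems. -/
inductive Thm {Agt : Type} [DecidableEq Agt] [Fintype Agt] : Form Agt → Prop
  | taut {φ : Form Agt} : Tautology φ → Thm φ
  | a1 (a : Agt) (φ ψ : Form Agt) :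
      Thm ((Form.know a (φ.imp ψ)).imp ((Form.know a φ).imp (Form.know a ψ)))
  | a2 (a : Agt) (φ : Form Agt) : Thm ((Form.know a φ).imp φ)
  | a3 (a : Agt) (φ : Form Agt) : Thm ((Form.know a φ).imp (Form.know a (Form.know a φ)))
  | a4 (a : Agt) (φ : Form Agt) :
      Thm ((Form.neg (Form.know a φ)).imp (Form.know a (Form.neg (Form.know a φ))))
  | a5 (φ : Form Agt) (p : ℕ) : Thm ((Form.ann φ (.atom p)).iff' (φ.imp (.atom p)))
  | a6 (φ ψ : Form Agt) : Thm ((Form.ann φ (.neg ψ)).iff' (φ.imp (.neg (Form.ann φ ψ))))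
  | a7 (φ ψ χ : Form Agt) :
      Thm ((Form.ann φ (.and ψ χ)).iff' ((Form.ann φ ψ).and (Form.ann φ χ)))
  | a8 (φ : Form Agt) (a : Agt) (ψ : Form Agt) :
      Thm ((Form.ann φ (.know a ψ)).iff' (φ.imp (.know a (Form.ann φ ψ))))
  | a9 (φ ψ χ : Form Agt) :
      Thm ((Form.ann φ (.ann ψ χ)).iff' (Form.ann (φ.and (Form.ann φ ψ)) χ))
  | a10 (G : Finset Agt) (χ φ : Form Agt) (f : Agt → EForm Agt) :
      Thm ((Form.group G χ φ).imp (χ.and (Form.ann ((GAnn G f).and χ) φ)))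
  | a11 (G : Finset Agt) (φ : Form Agt) (f : Agt → EForm Agt) :
      Thm ((Form.coal G φ).imp (.neg (Form.group Gᶜ (GAnn G f) (.neg φ))))
  | mp {φ ψ : Form Agt} : Thm (φ.imp ψ) → Thm φ → Thm ψ
  | necK (a : Agt) {φ : Form Agt} : Thm φ → Thm (Form.know a φ)
  | necAnn (ψ : Form Agt) {φ : Form Agt} : Thm φ → Thm (Form.ann ψ φ)
  | necGroup (G : Finset Agt) (χ : Form Agt) {φ : Form Agt} : Thm φ → Thm (Form.group G χ φ)
  | necCoal (G : Finset Agt) {φ : Form Agt} : Thm φ → Thm (Form.coal G φ)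
  | r5 {η : NForm Agt} {G : Finset Agt} {χ φ : Form Agt} :
      (∀ f : Agt → EForm Agt, Thm (η.subst (χ.and (Form.ann ((GAnn G f).and χ) φ)))) →
      Thm (η.subst (Form.group G χ φ))
  | r6 {η : NForm Agt} {G : Finset Agt} {φ : Form Agt} :
      (∀ f : Agt → EForm Agt, Thm (η.subst (.neg (Form.group Gᶜ (GAnn G f) (.neg φ))))) →
      Thm (η.subst (Form.coal G φ))

/-- A theory: contains all theorems, closed under modus ponens (R0), R5 and R6. -/
structure IsTheory (x : Set (Form Agt)) : Prop where
  mem_of_thm : ∀ {φ : Form Agt}, Thm φ → φ ∈ x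
  mp : ∀ {φ ψ : Form Agt}, φ.imp ψ ∈ x → φ ∈ x → ψ ∈ x
  r5 : ∀ (η : NForm Agt) (G : Finset Agt) (χ φ : Form Agt),
        (∀ f : Agt → EForm Agt, η.subst (χ.and (Form.ann ((GAnn G f).and χ) φ)) ∈ x) →
        η.subst (Form.group G χ φ) ∈ x
  r6 : ∀ (η : NForm Agt) (G : Finset Agt) (φ : Form Agt),
        (∀ f : Agt → EForm Agt, η.subst (.neg (Form.group Gᶜ (GAnn G f) (.neg φ))) ∈ x) →
        η.subst (Form.coal G φ) ∈ x

def Consistent (x : Set (Form Agt)) : Prop := Form.bot ∉ x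
def Maximal (x : Set (Form Agt)) : Prop := ∀ φ : Form Agt, φ ∈ x ∨ Form.neg φ ∈ x
def MCT (x : Set (Form Agt)) : Prop := IsTheory x ∧ Consistent x ∧ Maximal x

/-- The canonical model: worlds are maximal consistent theories. -/
def canonicalModel (Agt : Type) [DecidableEq Agt] [Fintype Agt] : Model Agt where
  W := {x : Set (Form Agt) // MCT x}
  rel a x y := {φ : Form Agt | Form.know a φ ∈ x.1} = {φ : Form Agt | Form.know a φ ∈ y.1}
  rel_equiv _ := ⟨fun _ => rfl, Eq.symm, Eq.trans⟩
  val p x := Form.atom p ∈ x.1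

/-- Size of a formula. -/
def fsize : Form Agt → ℕ
  | .atom _ => 1
  | .neg φ => fsize φ + 1
  | .know _ φ => fsize φ + 1
  | .group _ _ φ => fsize φ + 1
  | .coal _ φ => fsize φ + 1
  | .and φ ψ => fsize φ + fsize ψ + 1
  | .ann ψ φ => fsize ψ + 3 * fsize φ

/-- The [,]-depth. -/
def dG : Form Agt → ℕ
  | .atom _ => 0
  | .neg φ => dG φ
  | .know _ φ => dG φ
  | .coal _ φ => dG φ
  | .and φ ψ => max (dG φ) (dG ψ)
  | .ann ψ φ => dG ψ + dG φ
  | .group _ χ φ => dG χ + dG φ + 1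

/-- The [⟨⟩]-depth. -/
def dC : Form Agt → ℕ
  | .atom _ => 0
  | .neg φ => dC φ
  | .know _ φ => dC φ
  | .and φ ψ => max (dC φ) (dC ψ)
  | .ann ψ φ => dC ψ + dC φ
  | .group _ χ φ => dC χ + dC φ
  | .coal _ φ => dC φ + 1

/-- The well-founded order <^{Size}_{[,],[⟨⟩]}. -/
def measLt (φ ψ : Form Agt) : Prop :=
  dC φ < dC ψ ∨ (dC φ = dC ψ ∧ (dG φ < dG ψ ∨ (dG φ = dG ψ ∧ fsize φ < fsize ψ)))

end CoRGAL

namespace CoRGAL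

section Enc

variable {Agt : Type}

/-- Encoding of epistemic formulas into ℕ. -/
def encE (eA : Agt → ℕ) : EForm Agt → ℕ
  | .atom n => Nat.pair 0 n
  | .neg φ => Nat.pair 1 (encE eA φ)
  | .and φ ψ => Nat.pair 2 (Nat.pair (encE eA φ) (encE eA ψ))
  | .know a φ => Nat.pair 3 (Nat.pair (eA a) (encE eA φ))

lemma encE_inj {eA : Agt → ℕ} (hA : Function.Injective eA) :
    ∀ φ ψ : EForm Agt, encE eA φ = encE eA ψ → φ = ψ := by
  intro φ
  induction φ with
  | atom n => intro ψ h; cases ψ <;> simp [encE, Nat.pair_eq_pair] at h; simp [h]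
  | neg φ ih => intro ψ h; cases ψ <;> simp [encE, Nat.pair_eq_pair] at h
                rw [ih _ h]
  | and φ1 φ2 ih1 ih2 =>
      intro ψ h; cases ψ <;> simp [encE, Nat.pair_eq_pair] at h
      rw [ih1 _ h.1, ih2 _ h.2]
  | know a φ ih =>
      intro ψ h; cases ψ <;> simp [encE, Nat.pair_eq_pair] at h
      rw [hA h.1, ih _ h.2]

instance [Countable Agt] : Countable (EForm Agt) := by
  obtain ⟨eA, hA⟩ := exists_injective_nat Agt
  exact ⟨⟨encE eA, fun a b h => encE_inj hA a b h⟩⟩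

/-- Encoding of formulas into ℕ. -/
def encF (eA : Agt → ℕ) (eG : Finset Agt → ℕ) : Form Agt → ℕ
  | .atom n => Nat.pair 0 n
  | .neg φ => Nat.pair 1 (encF eA eG φ)
  | .and φ ψ => Nat.pair 2 (Nat.pair (encF eA eG φ) (encF eA eG ψ))
  | .know a φ => Nat.pair 3 (Nat.pair (eA a) (encF eA eG φ))
  | .ann φ ψ => Nat.pair 4 (Nat.pair (encF eA eG φ) (encF eA eG ψ))
  | .group G χ φ => Nat.pair 5 (Nat.pair (eG G) (Nat.pair (encF eA eG χ) (encF eA eG φ)))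
  | .coal G φ => Nat.pair 6 (Nat.pair (eG G) (encF eA eG φ))

lemma encF_inj {eA : Agt → ℕ} {eG : Finset Agt → ℕ}
    (hA : Function.Injective eA) (hG : Function.Injective eG) :
    ∀ φ ψ : Form Agt, encF eA eG φ = encF eA eG ψ → φ = ψ := by
  intro φ
  induction φ with
  | atom n => intro ψ h; cases ψ <;> simp [encF, Nat.pair_eq_pair] at h; simp [h]
  | neg φ ih => intro ψ h; cases ψ <;> simp [encF, Nat.pair_eq_pair] at h
                rw [ih _ h]
  | and φ1 φ2 ih1 ih2 =>
      intro ψ h; cases ψ <;> simp [encF, Nat.pair_eq_pair] at h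
      rw [ih1 _ h.1, ih2 _ h.2]
  | know a φ ih =>
      intro ψ h; cases ψ <;> simp [encF, Nat.pair_eq_pair] at h
      rw [hA h.1, ih _ h.2]
  | ann φ1 φ2 ih1 ih2 =>
      intro ψ h; cases ψ <;> simp [encF, Nat.pair_eq_pair] at h
      rw [ih1 _ h.1, ih2 _ h.2]
  | group G χ φ ihχ ihφ =>
      intro ψ h; cases ψ <;> simp [encF, Nat.pair_eq_pair] at h
      rw [hG h.1, ihχ _ h.2.1, ihφ _ h.2.2]
  | coal G φ ih =>
      intro ψ h; cases ψ <;> simp [encF, Nat.pair_eq_pair] at h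
      rw [hG h.1, ih _ h.2]

instance [Countable Agt] : Countable (Form Agt) := by
  obtain ⟨eA, hA⟩ := exists_injective_nat Agt
  obtain ⟨eG, hG⟩ := exists_injective_nat (Finset Agt)
  exact ⟨⟨encF eA eG, fun a b h => encF_inj hA hG a b h⟩⟩

/-- Encoding of necessity forms into ℕ. -/
def encN (eA : Agt → ℕ) (eF : Form Agt → ℕ) : NForm Agt → ℕ
  | .hole => Nat.pair 0 0
  | .imp φ η => Nat.pair 1 (Nat.pair (eF φ) (encN eA eF η))
  | .know a η => Nat.pair 2 (Nat.pair (eA a) (encN eA eF η))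
  | .ann φ η => Nat.pair 3 (Nat.pair (eF φ) (encN eA eF η))

lemma encN_inj {eA : Agt → ℕ} {eF : Form Agt → ℕ}
    (hA : Function.Injective eA) (hF : Function.Injective eF) :
    ∀ η θ : NForm Agt, encN eA eF η = encN eA eF θ → η = θ := by
  intro η
  induction η with
  | hole => intro θ h; cases θ <;> simp [encN, Nat.pair_eq_pair] at h; rfl
  | imp φ η ih =>
      intro θ h; cases θ <;> simp [encN, Nat.pair_eq_pair] at h
      rw [hF h.1, ih _ h.2]
  | know a η ih =>
      intro θ h; cases θ <;> simp [encN, Nat.pair_eq_pair] at h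
      rw [hA h.1, ih _ h.2]
  | ann φ η ih =>
      intro θ h; cases θ <;> simp [encN, Nat.pair_eq_pair] at h
      rw [hF h.1, ih _ h.2]

instance [Countable Agt] : Countable (NForm Agt) := by
  obtain ⟨eA, hA⟩ := exists_injective_nat Agt
  obtain ⟨eF, hF⟩ := exists_injective_nat (Form Agt)
  exact ⟨⟨encN eA eF, fun a b h => encN_inj hA hF a b h⟩⟩

end Enc

section Lindenbaum

variable {Agt : Type} [DecidableEq Agt] [Fintype Agt]

/-! ### Tautology facts -/

lemma v_imp {v : Form Agt → Prop} (hn : ∀ ψ, v (Form.neg ψ) ↔ ¬ v ψ)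
    (ha : ∀ ψ χ, v (Form.and ψ χ) ↔ (v ψ ∧ v χ)) (φ ψ : Form Agt) :
    v (φ.imp ψ) ↔ (v φ → v ψ) := by
  simp only [Form.imp, hn, ha]; tauto

lemma v_bot {v : Form Agt → Prop} (hn : ∀ ψ, v (Form.neg ψ) ↔ ¬ v ψ)
    (ha : ∀ ψ χ, v (Form.and ψ χ) ↔ (v ψ ∧ v χ)) :
    v (Form.bot : Form Agt) ↔ False := by
  simp only [Form.bot, hn, ha]; tauto

lemma thm_k (φ ψ : Form Agt) : Thm (ψ.imp (φ.imp ψ)) :=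
  .taut fun v hn ha => by simp only [v_imp hn ha]; tauto

lemma thm_s (φ α β : Form Agt) :
    Thm ((φ.imp (α.imp β)).imp ((φ.imp α).imp (φ.imp β))) :=
  .taut fun v hn ha => by simp only [v_imp hn ha]; tauto

lemma thm_id (φ : Form Agt) : Thm (φ.imp φ) :=
  .taut fun v hn ha => by simp only [v_imp hn ha]; tauto

lemma thm_impbot (φ : Form Agt) : Thm ((φ.imp Form.bot).imp (Form.neg φ)) :=
  .taut fun v hn ha => by simp only [v_imp hn ha, v_bot hn ha, hn]; tauto

lemma thm_contra (φ : Form Agt) : Thm ((Form.neg φ).imp (φ.imp Form.bot)) :=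
  .taut fun v hn ha => by simp only [v_imp hn ha, v_bot hn ha, hn]; tauto

lemma thm_dne (φ : Form Agt) : Thm ((Form.neg (Form.neg φ)).imp φ) :=
  .taut fun v hn ha => by simp only [v_imp hn ha, hn]; tauto

/-! ### Extensions of theories -/

/-- The extension of `x` by `φ`. -/
def ext (x : Set (Form Agt)) (φ : Form Agt) : Set (Form Agt) := {ψ | φ.imp ψ ∈ x}

/-- R5 premises. -/
noncomputable abbrev prem5 (η : NForm Agt) (G : Finset Agt) (χ φ : Form Agt) (f : Agt → EForm Agt) :
    Form Agt :=
  η.subst (χ.and (Form.ann ((GAnn G f).and χ) φ))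

/-- R6 premises. -/
noncomputable abbrev prem6 (η : NForm Agt) (G : Finset Agt) (φ : Form Agt) (f : Agt → EForm Agt) :
    Form Agt :=
  η.subst (.neg (Form.group Gᶜ (GAnn G f) (.neg φ)))

variable {x : Set (Form Agt)}

lemma IsTheory.ext_theory (hx : IsTheory x) (φ : Form Agt) : IsTheory (ext x φ) where
  mem_of_thm h := hx.mp (hx.mem_of_thm (thm_k φ _)) (hx.mem_of_thm h)
  mp h1 h2 := hx.mp (hx.mp (hx.mem_of_thm (thm_s φ _ _)) h1) h2
  r5 η G χ ψ h := hx.r5 (NForm.imp φ η) G χ ψ h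
  r6 η G ψ h := hx.r6 (NForm.imp φ η) G ψ h

lemma subset_ext (hx : IsTheory x) (φ : Form Agt) : x ⊆ ext x φ :=
  fun _ h => hx.mp (hx.mem_of_thm (thm_k φ _)) h

lemma mem_ext_self (hx : IsTheory x) (φ : Form Agt) : φ ∈ ext x φ :=
  hx.mem_of_thm (thm_id φ)

lemma neg_mem_of_inconsistent (hx : IsTheory x) {φ : Form Agt}
    (h : ¬ Consistent (ext x φ)) : Form.neg φ ∈ x := by
  have hb : Form.bot ∈ ext x φ := not_not.mp h
  exact hx.mp (hx.mem_of_thm (thm_impbot φ)) hb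

lemma bot_mem (hx : IsTheory x) {φ : Form Agt} (h1 : φ ∈ x) (h2 : Form.neg φ ∈ x) :
    Form.bot ∈ x :=
  hx.mp (hx.mp (hx.mem_of_thm (thm_contra φ)) h2) h1

lemma consistent_ext_neg (hx : IsTheory x) (hc : Consistent x) {φ : Form Agt}
    (h : ¬ Consistent (ext x φ)) : Consistent (ext x (Form.neg φ)) := by
  intro hb
  have h1 := neg_mem_of_inconsistent hx h
  have h2 := neg_mem_of_inconsistent hx (fun hcc => hcc hb)
  exact hc (bot_mem hx h1 h2)

lemma r5_witness (hx : IsTheory x) (hc : Consistent x) (η : NForm Agt) (G : Finset Agt)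
    (χ φ : Form Agt) (h : ¬ Consistent (ext x (η.subst (Form.group G χ φ)))) :
    ∃ f : Agt → EForm Agt, Consistent (ext x (Form.neg (prem5 η G χ φ f))) := by
  by_contra hno
  push_neg at hno
  have hp : ∀ f, prem5 η G χ φ f ∈ x := fun f =>
    hx.mp (hx.mem_of_thm (thm_dne _)) (neg_mem_of_inconsistent hx (hno f))
  have hconc := hx.r5 η G χ φ hp
  exact hc (bot_mem hx hconc (neg_mem_of_inconsistent hx h))

lemma r6_witness (hx : IsTheory x) (hc : Consistent x) (η : NForm Agt) (G : Finset Agt)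
    (φ : Form Agt) (h : ¬ Consistent (ext x (η.subst (Form.coal G φ)))) :
    ∃ f : Agt → EForm Agt, Consistent (ext x (Form.neg (prem6 η G φ f))) := by
  by_contra hno
  push_neg at hno
  have hp : ∀ f, prem6 η G φ f ∈ x := fun f =>
    hx.mp (hx.mem_of_thm (thm_dne _)) (neg_mem_of_inconsistent hx (hno f))
  have hconc := hx.r6 η G φ hp
  exact hc (bot_mem hx hconc (neg_mem_of_inconsistent hx h))

/-! ### The step-by-step construction -/

/-- One step of the construction: a plain formula, an R5 instance, or an R6 instance. -/
abbrev StepT (Agt : Type) [DecidableEq Agt] : Type :=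
  Form Agt ⊕ (NForm Agt × Finset Agt × Form Agt × Form Agt) ⊕ (NForm Agt × Finset Agt × Form Agt)

instance : Nonempty (StepT Agt) := ⟨.inl (.atom 0)⟩

open Classical in
/-- A witness announcement for an R5 instance. -/
noncomputable def wit5 (x : Set (Form Agt)) (η : NForm Agt) (G : Finset Agt)
    (χ φ : Form Agt) : Agt → EForm Agt :=
  if h : ∃ f : Agt → EForm Agt, Consistent (ext x (Form.neg (prem5 η G χ φ f))) then h.choose
  else fun _ => .atom 0

open Classical in
/-- A witness announcement for an R6 instance. -/
noncomputable def wit6 (x : Set (Form Agt)) (η : NForm Agt) (G : Finset Agt)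
    (φ : Form Agt) : Agt → EForm Agt :=
  if h : ∃ f : Agt → EForm Agt, Consistent (ext x (Form.neg (prem6 η G φ f))) then h.choose
  else fun _ => .atom 0

open Classical in
/-- Performing one step of the construction. -/
noncomputable def doStep (x : Set (Form Agt)) : StepT Agt → Set (Form Agt)
  | .inl φ => if Consistent (ext x φ) then ext x φ else ext x (.neg φ)
  | .inr (.inl (η, G, χ, φ)) =>
      if Consistent (ext x (η.subst (.group G χ φ))) then ext x (η.subst (.group G χ φ))
      else ext x (.neg (prem5 η G χ φ (wit5 x η G χ φ)))
  | .inr (.inr (η, G, φ)) =>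
      if Consistent (ext x (η.subst (.coal G φ))) then ext x (η.subst (.coal G φ))
      else ext x (.neg (prem6 η G φ (wit6 x η G φ)))

lemma doStep_spec (hx : IsTheory x) (hc : Consistent x) (s : StepT Agt) :
    IsTheory (doStep x s) ∧ Consistent (doStep x s) ∧ x ⊆ doStep x s := by
  classical
  rcases s with φ | ⟨η, G, χ, φ⟩ | ⟨η, G, φ⟩
  · simp only [doStep]
    split
    · exact ⟨hx.ext_theory _, ‹_›, subset_ext hx _⟩
    · exact ⟨hx.ext_theory _, consistent_ext_neg hx hc ‹_›, subset_ext hx _⟩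
  · simp only [doStep]
    split
    · exact ⟨hx.ext_theory _, ‹_›, subset_ext hx _⟩
    · next h =>
      refine ⟨hx.ext_theory _, ?_, subset_ext hx _⟩
      have hex := r5_witness hx hc η G χ φ h
      rw [wit5, dif_pos hex]
      exact hex.choose_spec
  · simp only [doStep]
    split
    · exact ⟨hx.ext_theory _, ‹_›, subset_ext hx _⟩
    · next h =>
      refine ⟨hx.ext_theory _, ?_, subset_ext hx _⟩
      have hex := r6_witness hx hc η G φ h
      rw [wit6, dif_pos hex]
      exact hex.choose_spec

/-- The chain of theories. -/
noncomputable def seqth (x : Set (Form Agt)) (e : ℕ → StepT Agt) : ℕ → Set (Form Agt)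
  | 0 => x
  | n + 1 => doStep (seqth x e n) (e n)

end Lindenbaum

end CoRGAL

open CoRGAL

/-- Lindenbaum: every consistent theory extends to a maximal consistent theory. -/
theorem statement16 (Agt : Type) [DecidableEq Agt] [Fintype Agt]
    (x : Set (Form Agt)) (hx : IsTheory x) (hc : Consistent x) :
    ∃ y : Set (Form Agt), IsTheory y ∧ Consistent y ∧ Maximal y ∧ x ⊆ y := by
  classical
  obtain ⟨e, he⟩ := exists_surjective_nat (StepT Agt)
  set y : Set (Form Agt) := ⋃ n, seqth x e n with hy
  -- invariants
  have inv : ∀ n, IsTheory (seqth x e n) ∧ Consistent (seqth x e n) := by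
    intro n
    induction n with
    | zero => exact ⟨hx, hc⟩
    | succ n ih =>
        have := doStep_spec ih.1 ih.2 (e n)
        exact ⟨this.1, this.2.1⟩
  have mono : Monotone (seqth x e) := by
    apply monotone_nat_of_le_succ
    intro n
    exact (doStep_spec (inv n).1 (inv n).2 (e n)).2.2
  have memy : ∀ {φ : Form Agt} {n : ℕ}, φ ∈ seqth x e n → φ ∈ y :=
    fun {φ n} h => Set.mem_iUnion.2 ⟨n, h⟩
  have pair : ∀ {φ ψ : Form Agt}, φ ∈ y → ψ ∈ y → ∃ n, φ ∈ seqth x e n ∧ ψ ∈ seqth x e n := by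
    intro φ ψ h1 h2
    obtain ⟨n, hn⟩ := Set.mem_iUnion.1 h1
    obtain ⟨m, hm⟩ := Set.mem_iUnion.1 h2
    exact ⟨max n m, mono (le_max_left n m) hn, mono (le_max_right n m) hm⟩
  have ycons : Consistent y := by
    intro hb
    obtain ⟨n, hn⟩ := Set.mem_iUnion.1 hb
    exact (inv n).2 hn
  have ymp : ∀ {φ ψ : Form Agt}, φ.imp ψ ∈ y → φ ∈ y → ψ ∈ y := by
    intro φ ψ h1 h2
    obtain ⟨n, hn1, hn2⟩ := pair h1 h2
    exact memy ((inv n).1.mp hn1 hn2)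
  have nopair : ∀ {φ : Form Agt}, φ ∈ y → Form.neg φ ∈ y → False := by
    intro φ h1 h2
    obtain ⟨n, hn1, hn2⟩ := pair h1 h2
    exact (inv n).2 (bot_mem (inv n).1 hn1 hn2)
  refine ⟨y, ⟨?_, fun h1 h2 => ymp h1 h2, ?_, ?_⟩, ycons, ?_, ?_⟩
  · -- contains all theorems
    intro φ h
    exact memy (n := 0) (hx.mem_of_thm h)
  · -- closed under R5
    intro η G χ φ hall
    obtain ⟨n, hn⟩ := he (.inr (.inl (η, G, χ, φ)))
    have hstep : seqth x e (n + 1) = doStep (seqth x e n) (.inr (.inl (η, G, χ, φ))) := by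
      rw [seqth, hn]
    by_cases hcc : Consistent (ext (seqth x e n) (η.subst (.group G χ φ)))
    · have : η.subst (.group G χ φ) ∈ seqth x e (n + 1) := by
        rw [hstep]
        simp only [doStep, if_pos hcc]
        exact mem_ext_self (inv n).1 _
      exact memy this
    · exfalso
      have hwit : Form.neg (prem5 η G χ φ (wit5 (seqth x e n) η G χ φ)) ∈ seqth x e (n + 1) := by
        rw [hstep]
        simp only [doStep, if_neg hcc]
        exact mem_ext_self (inv n).1 _
      exact nopair (hall _) (memy hwit)
  · -- closed under R6
    intro η G φ hall
    obtain ⟨n, hn⟩ := he (.inr (.inr (η, G, φ)))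
    have hstep : seqth x e (n + 1) = doStep (seqth x e n) (.inr (.inr (η, G, φ))) := by
      rw [seqth, hn]
    by_cases hcc : Consistent (ext (seqth x e n) (η.subst (.coal G φ)))
    · have : η.subst (.coal G φ) ∈ seqth x e (n + 1) := by
        rw [hstep]
        simp only [doStep, if_pos hcc]
        exact mem_ext_self (inv n).1 _
      exact memy this
    · exfalso
      have hwit : Form.neg (prem6 η G φ (wit6 (seqth x e n) η G φ)) ∈ seqth x e (n + 1) := by
        rw [hstep]
        simp only [doStep, if_neg hcc]
        exact mem_ext_self (inv n).1 _
      exact nopair (hall _) (memy hwit)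
  · -- maximal
    intro φ
    obtain ⟨n, hn⟩ := he (.inl φ)
    have hstep : seqth x e (n + 1) = doStep (seqth x e n) (.inl φ) := by
      rw [seqth, hn]
    by_cases hcc : Consistent (ext (seqth x e n) φ)
    · left
      have : φ ∈ seqth x e (n + 1) := by
        rw [hstep]; simp only [doStep, if_pos hcc]
        exact mem_ext_self (inv n).1 _
      exact memy this
    · right
      have : Form.neg φ ∈ seqth x e (n + 1) := by
        rw [hstep]; simp only [doStep, if_neg hcc]
        exact mem_ext_self (inv n).1 _
      exact memy this
  · -- extends x
    exact fun φ h => memy (n := 0) h
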